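/- arXiv:math/9906116 — 5 statements merged into one kernel-verified Lean document; each statement's English description precedes it below -/
import Mathlib

section
/- Let n ≥ 2 and let {b₁,...,bₙ} be a ℤ-basis of a free abelian subgroup M of ℂ. Let μ = Σ m_i b_i with all m_i ≥ 0 and m₁ ≠ 0, m₂ ≠ 0. Define b'₁ = m₂μ + b₁, b'₂ = m₁μ − b₂, and b'_i = b'₁ + b_i for i = 3,...,n. Then {b'₁,...,b'ₙ} is a ℤ-basis of M. -/
/-- Basis change in the proof of Lemma 2.3, case m₁ ≠ 0, m₂ ≠ 0. -/
theorem basis_change_lemma23_case1 (n : ℕ) (hn : 2 ≤ n)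
    (M : AddSubgroup ℂ) (b : Module.Basis (Fin n) ℤ M)
    (m : Fin n → ℕ)
    (hm1 : m ⟨0, by omega⟩ ≠ 0) (hm2 : m ⟨1, by omega⟩ ≠ 0)
    (μ : M) (hμ : μ = ∑ i : Fin n, (m i : ℤ) • b i)
    (b' : Fin n → M)
    (hb'1 : b' ⟨0, by omega⟩ = (m ⟨1, by omega⟩ : ℤ) • μ + b ⟨0, by omega⟩)
    (hb'2 : b' ⟨1, by omega⟩ = (m ⟨0, by omega⟩ : ℤ) • μ - b ⟨1, by omega⟩)
    (hb'i : ∀ i : Fin n, 2 ≤ (i : ℕ) → b' i = b' ⟨0, by omega⟩ + b i) :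
    ∃ B' : Module.Basis (Fin n) ℤ M, ∀ i, B' i = b' i := by
  set i0 : Fin n := ⟨0, by omega⟩ with hi0
  set i1 : Fin n := ⟨1, by omega⟩ with hi1
  set S : Finset (Fin n) := Finset.univ.filter (fun i => 2 ≤ (i : ℕ)) with hS
  set p : Submodule ℤ M := Submodule.span ℤ (Set.range b') with hp
  have hmem : ∀ i, b' i ∈ p := fun i => Submodule.subset_span ⟨i, rfl⟩
  -- b i ∈ p for i ∈ S
  have hbS : ∀ i ∈ S, (b i : M) ∈ p := by
    intro i hi
    simp only [hS, Finset.mem_filter] at hi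
    have := hb'i i hi.2
    have : b i = b' i - b' i0 := by rw [this]; abel
    rw [this]
    exact sub_mem (hmem i) (hmem i0)
  -- split the sum
  have hsplit : Finset.univ = insert i0 (insert i1 S) := by
    ext i
    simp only [Finset.mem_insert, hS, Finset.mem_filter, Finset.mem_univ, true_and, true_iff]
    rcases Nat.lt_or_ge (i : ℕ) 2 with h | h
    · interval_cases h' : (i : ℕ)
      · left; exact Fin.ext h'
      · right; left; exact Fin.ext h'
    · right; right; exact h
  have hi0S : i0 ∉ insert i1 S := by
    simp [hS, Fin.ext_iff, hi0, hi1]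
  have hi1S : i1 ∉ S := by simp [hS, hi1]
  have hμsplit : μ = (m i0 : ℤ) • b i0 + (m i1 : ℤ) • b i1 + ∑ i ∈ S, (m i : ℤ) • b i := by
    rw [hμ, hsplit, Finset.sum_insert hi0S, Finset.sum_insert hi1S]; abel
  -- μ ∈ p
  have hμeq : μ = (m i0 : ℤ) • b' i0 - (m i1 : ℤ) • b' i1 + ∑ i ∈ S, (m i : ℤ) • b i := by
    rw [hb'1, hb'2]
    rw [hμsplit]
    simp only [smul_add, smul_sub, smul_smul]
    ring_nf
    abel
  have hμp : μ ∈ p := by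
    rw [hμeq]
    exact add_mem (sub_mem (Submodule.smul_mem _ _ (hmem i0)) (Submodule.smul_mem _ _ (hmem i1)))
      (Submodule.sum_mem _ fun i hi => Submodule.smul_mem _ _ (hbS i hi))
  have hb0 : (b i0 : M) ∈ p := by
    have : b i0 = b' i0 - (m i1 : ℤ) • μ := by rw [hb'1]; abel
    rw [this]; exact sub_mem (hmem i0) (Submodule.smul_mem _ _ hμp)
  have hb1 : (b i1 : M) ∈ p := by
    have : b i1 = (m i0 : ℤ) • μ - b' i1 := by rw [hb'2]; abel
    rw [this]; exact sub_mem (Submodule.smul_mem _ _ hμp) (hmem i1)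
  have hbp : ∀ i, (b i : M) ∈ p := by
    intro i
    rcases Nat.lt_or_ge (i : ℕ) 2 with h | h
    · interval_cases h' : (i : ℕ)
      · have : i = i0 := Fin.ext h'
        rw [this]; exact hb0
      · have : i = i1 := Fin.ext h'
        rw [this]; exact hb1
    · exact hbS i (by simp [hS, h])
  have hptop : p = ⊤ := by
    rw [eq_top_iff, ← b.span_eq]
    exact Submodule.span_le.2 (Set.range_subset_iff.2 hbp)
  -- the endomorphism
  let f : M →ₗ[ℤ] M := b.constr ℤ b'
  have hsurj : Function.Surjective f := by
    rw [← LinearMap.range_eq_top, Module.Basis.constr_range, ← hp, hptop]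
  haveI : Module.Finite ℤ M := Module.Finite.of_basis b
  have hbij : Function.Bijective f :=
    ⟨OrzechProperty.injective_of_surjective_endomorphism f hsurj, hsurj⟩
  let e : M ≃ₗ[ℤ] M := LinearEquiv.ofBijective f hbij
  refine ⟨b.map e, fun i => ?_⟩
  simp [e, f, Module.Basis.map_apply, LinearEquiv.ofBijective_apply, Module.Basis.constr_basis]
end

section
/- For a' ∈ ℂ and an additive subgroup M ⊆ ℂ, the formulas L_μ x_ν = (ν+μ)x_{μ+ν} for ν ≠ 0, L_μ x₀ = μ(1+(μ+1)a')x_μ, and c x_ν = 0 define a Vir[M]-module structure A(a') on the space spanned by {x_ν | ν ∈ M}. -/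
/-- The formulas `L_μ x_ν = (ν+μ) x_{μ+ν}` for `ν ≠ 0`,
`L_μ x₀ = μ(1+(μ+1)a') x_μ`, `c x_ν = 0` define a Vir[M]-module structure `A(a')`:
the operators satisfy `L_μ L_ν − L_ν L_μ = (ν−μ) L_{μ+ν}` (the central term acts by 0). -/
theorem Aa'_is_module
    (M : AddSubgroup ℂ) (a' : ℂ)
    (V : Type) [AddCommGroup V] [Module ℂ V]
    (x : Module.Basis M ℂ V)
    (ρ : M → Module.End ℂ V)
    (hρ : ∀ μ ν : M, ν ≠ 0 → ρ μ (x ν) = ((ν : ℂ) + (μ : ℂ)) • x (μ + ν))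
    (hρ0 : ∀ μ : M, ρ μ (x 0) = ((μ : ℂ) * (1 + ((μ : ℂ) + 1) * a')) • x μ) :
    ∀ μ ν : M, ρ μ ∘ₗ ρ ν - ρ ν ∘ₗ ρ μ = ((ν : ℂ) - (μ : ℂ)) • ρ (μ + ν) := by
  have key : ∀ μ κ : M, ρ μ (x κ) =
      (if κ = 0 then (μ : ℂ) * (1 + ((μ : ℂ) + 1) * a') else ((κ : ℂ) + (μ : ℂ))) • x (μ + κ) := by
    intro μ κ
    by_cases h : κ = 0
    · subst h; simpa using hρ0 μ
    · rw [if_neg h, hρ μ κ h]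
  intro μ ν
  apply x.ext
  intro κ
  simp only [LinearMap.sub_apply, LinearMap.comp_apply, LinearMap.smul_apply, key, map_smul,
    smul_smul]
  rw [show μ + (ν + κ) = (μ + ν) + κ by abel, show ν + (μ + κ) = (μ + ν) + κ by abel,
    ← sub_smul]
  congr 1
  have coe : ∀ a b : M, a + b = 0 → (a : ℂ) + (b : ℂ) = 0 := by
    intro a b h
    have : ((a + b : M) : ℂ) = 0 := by rw [h]; simp
    simpa using this
  split_ifs with h1 h2 h3 h4 h5 h6 h7 <;>
    first
    | (subst h1
       simp_all only [AddSubgroup.coe_zero]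
       push_cast
       try (rw [show (ν : ℂ) = 0 from by simpa using coe _ _ h2])
       try (rw [show (μ : ℂ) = 0 from by simpa using coe _ _ h3])
       try (rw [show (μ : ℂ) = 0 from by simpa using coe _ _ h4])
       ring)
    | (push_cast
       try (rw [show (ν : ℂ) = -(κ : ℂ) from eq_neg_of_add_eq_zero_left (coe _ _ h2)])
       try (rw [show (ν : ℂ) = -(κ : ℂ) from eq_neg_of_add_eq_zero_left (coe _ _ h5)])
       try (rw [show (μ : ℂ) = -(κ : ℂ) from eq_neg_of_add_eq_zero_left (coe _ _ h3)])
       try (rw [show (μ : ℂ) = -(κ : ℂ) from eq_neg_of_add_eq_zero_left (coe _ _ h6)])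
       try (rw [show (μ : ℂ) = -(κ : ℂ) from eq_neg_of_add_eq_zero_left (coe _ _ h7)])
       ring)
end

section
/- For a' ∈ ℂ and an additive subgroup M ⊆ ℂ, the formulas L_μ x_ν = ν x_{μ+ν} for ν ≠ −μ, L_μ x_{−μ} = −μ(1+(μ+1)a')x₀, and c x_ν = 0 define a Vir[M]-module structure B(a') on the space spanned by {x_ν | ν ∈ M}. -/
/-- The formulas `L_μ x_ν = ν x_{μ+ν}` for `ν ≠ −μ`,
`L_μ x_{−μ} = −μ(1+(μ+1)a') x₀`, `c x_ν = 0` define a Vir[M]-module structure `B(a')`: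
the operators satisfy `L_μ L_ν − L_ν L_μ = (ν−μ) L_{μ+ν}` (the central term acts by 0). -/
theorem Ba'_is_module
    (M : AddSubgroup ℂ) (a' : ℂ)
    (V : Type) [AddCommGroup V] [Module ℂ V]
    (x : Module.Basis M ℂ V)
    (ρ : M → Module.End ℂ V)
    (hρ : ∀ μ ν : M, ν ≠ -μ → ρ μ (x ν) = (ν : ℂ) • x (μ + ν))
    (hρ0 : ∀ μ : M, ρ μ (x (-μ)) = (-(μ : ℂ) * (1 + ((μ : ℂ) + 1) * a')) • x 0) :
    ∀ μ ν : M, ρ μ ∘ₗ ρ ν - ρ ν ∘ₗ ρ μ = ((ν : ℂ) - (μ : ℂ)) • ρ (μ + ν) := by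
  have key : ∀ μ lam : M, ρ μ (x lam)
      = (if lam = -μ then -(μ : ℂ) * (1 + ((μ : ℂ) + 1) * a') else (lam : ℂ)) • x (μ + lam) := by
    intro μ lam
    by_cases h : lam = -μ
    · rw [if_pos h, h, hρ0 μ]
      have : μ + -μ = (0 : M) := by abel
      rw [this]
    · rw [if_neg h, hρ μ lam h]
  intro μ ν
  refine x.ext fun lam => ?_
  simp only [LinearMap.sub_apply, LinearMap.comp_apply, LinearMap.smul_apply]
  rw [key ν lam, map_smul, key μ (ν + lam), key μ lam, map_smul, key ν (μ + lam),
    key (μ + ν) lam]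
  have e1 : μ + (ν + lam) = μ + ν + lam := by abel
  have e2 : ν + (μ + lam) = μ + ν + lam := by abel
  have k1 : ν + lam - -μ = lam - -(μ + ν) := by abel
  have k2 : μ + lam - -ν = lam - -(μ + ν) := by abel
  have p1 : (ν + lam = -μ) ↔ (lam = -(μ + ν)) := by
    rw [← sub_eq_zero, k1, sub_eq_zero]
  have p2 : (μ + lam = -ν) ↔ (lam = -(μ + ν)) := by
    rw [← sub_eq_zero, k2, sub_eq_zero]
  rw [e1, e2, smul_smul, smul_smul, smul_smul, ← sub_smul]
  simp only [p1, p2]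
  congr 1
  split_ifs
  all_goals rename_i h1 h2 h3
  · -- (T,T,T)
    subst h1
    have hmu : μ = 0 := right_eq_add.mp (neg_injective h2)
    subst hmu
    have hnu : ν = 0 := by have := neg_injective h3; simpa using this
    subst hnu
    push_cast; ring
  · -- (T,T,F)
    subst h1
    have hmu : μ = 0 := right_eq_add.mp (neg_injective h2)
    subst hmu
    push_cast; ring
  · -- (T,F,T)
    subst h1
    have hmu : ν = μ := neg_injective h3
    subst hmu
    push_cast; ring
  · -- (T,F,F)
    subst h1
    push_cast; ring
  · -- (F,T,T)
    subst h2
    have hnu : ν = 0 := add_eq_left.mp (neg_injective h3)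
    subst hnu
    push_cast; ring
  · -- (F,T,F)
    subst h2
    push_cast; ring
  · -- (F,F,T)
    subst h3
    push_cast; ring
  · -- (F,F,F)
    push_cast; ring
end

section
/- Let M₁ be an additive subgroup of ℂ and d ∈ ℂ with d ∉ M₁. Suppose (a_ν)_{ν∈M₁} is a family of complex numbers satisfying, for all ν, μ ∈ M₁ and fixed b, b', k, a ∈ ℂ (writing ν̄ = a+kd+ν), the three recurrences (3.13a–c) of Su's paper relating a_{ν−μ}, a_ν, a_{ν+μ}. If the set {ν ∈ M₁ : a_ν ≠ 0} is infinite, then the determinant Δ(ν̄, μ) of the 3×3 coefficient matrix of (3.13a–c) vanishes identically as a polynomial in ν̄ and μ. -/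
/-- The 3×3 coefficient matrix of the system of equations (3.13a–c) in the unknowns
`a_{ν−μ}, a_ν, a_{ν+μ}`, as polynomials in `x = ν̄` and `y = μ` (parameters `b, b', d`). -/
noncomputable def suMatrix (b b' d x y : ℂ) : Matrix (Fin 3) (Fin 3) ℂ :=
  !![(d - 2*y) * (x - y + d + y*b') * (x + d + y*b') - d * (d - y) * (x - y + d + 2*y*b'),
     -(2 * (d - 2*y) * (x - y + y*b) * (x + d + y*b')),
     (d - 2*y) * (x - y + y*b) * (x + y*b) + d * (d - y) * (x - y + 2*y*b);
     (x - y*b) * (x - y + d + y*b'),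
     -((x + d - y*b') * (x - y + d + y*b') + (x + y*b) * (x + y - y*b) - (d + y) * (d - 2*y)),
     (x + y*b) * (x + y + d - y*b');
     (d + 2*y) * (x + y - y*b) * (x - y*b) + d * (d + y) * (x + y - 2*y*b),
     -(2 * (d + 2*y) * (x + y - y*b) * (x + d - y*b')),
     (d + 2*y) * (x + y + d - y*b') * (x + d - y*b') - d * (d + y) * (x + y + d - 2*y*b')]

/-- Generic version of the coefficient matrix over any commutative ring. -/
def suMat {R : Type*} [CommRing R] (b b' d x y : R) : Matrix (Fin 3) (Fin 3) R :=
  !![(d - 2*y) * (x - y + d + y*b') * (x + d + y*b') - d * (d - y) * (x - y + d + 2*y*b'),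
     -(2 * (d - 2*y) * (x - y + y*b) * (x + d + y*b')),
     (d - 2*y) * (x - y + y*b) * (x + y*b) + d * (d - y) * (x - y + 2*y*b);
     (x - y*b) * (x - y + d + y*b'),
     -((x + d - y*b') * (x - y + d + y*b') + (x + y*b) * (x + y - y*b) - (d + y) * (d - 2*y)),
     (x + y*b) * (x + y + d - y*b');
     (d + 2*y) * (x + y - y*b) * (x - y*b) + d * (d + y) * (x + y - 2*y*b),
     -(2 * (d + 2*y) * (x + y - y*b) * (x + d - y*b')),
     (d + 2*y) * (x + y + d - y*b') * (x + d - y*b') - d * (d + y) * (x + y + d - 2*y*b')]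

lemma suMat_map {R S : Type*} [CommRing R] [CommRing S] (g : R →+* S) (b b' d x y : R) :
    (suMat b b' d x y).map g = suMat (g b) (g b') (g d) (g x) (g y) := by
  ext i j
  fin_cases i <;> fin_cases j <;>
    simp [suMat, Matrix.map_apply, map_ofNat]

lemma suMatrix_eq (b b' d x y : ℂ) : suMatrix b b' d x y = suMat b b' d x y := rfl

open Polynomial

/-- If a family `(a_ν)_{ν ∈ M₁}` satisfies the three recurrences (3.13a–c)
for all `ν, μ ∈ M₁` (with `ν̄ = a + kd + ν`) and the set `{ν | a_ν ≠ 0}` is infinite,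
then the determinant `Δ(ν̄, μ)` of the coefficient matrix vanishes identically. -/
theorem det_vanishes_identically
    (M₁ : AddSubgroup ℂ) (d : ℂ) (hd : d ∉ M₁)
    (b b' k a : ℂ)
    (f : M₁ → ℂ)
    (hrec : ∀ ν μ : M₁,
      (suMatrix b b' d (a + k * d + (ν : ℂ)) (μ : ℂ)).mulVec
        ![f (ν - μ), f ν, f (ν + μ)] = 0)
    (hinf : {ν : M₁ | f ν ≠ 0}.Infinite) :
    ∀ x y : ℂ, (suMatrix b b' d x y).det = 0 := by
  -- The infinite set of complex values of nonvanishing indices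
  have hT : ((fun ν : M₁ => (ν : ℂ)) '' {ν : M₁ | f ν ≠ 0}).Infinite :=
    hinf.image (Subtype.coe_injective.injOn)
  -- Step 0: determinant vanishes at the sample points
  have step0 : ∀ ν μ : M₁, f ν ≠ 0 →
      (suMatrix b b' d (a + k * d + (ν : ℂ)) (μ : ℂ)).det = 0 := by
    intro ν μ hν
    apply Matrix.exists_mulVec_eq_zero_iff.mp
    refine ⟨![f (ν - μ), f ν, f (ν + μ)], ?_, hrec ν μ⟩
    intro h
    apply hν
    have := congrFun h 1
    simpa using this
  -- Step 1: for a nonvanishing index, determinant vanishes for all y'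
  have step1 : ∀ ν : M₁, f ν ≠ 0 → ∀ y' : ℂ,
      (suMatrix b b' d (a + k * d + (ν : ℂ)) y').det = 0 := by
    intro ν hν y'
    set p : Polynomial ℂ :=
      (suMat (C b) (C b') (C d) (C (a + k * d + (ν : ℂ))) X).det with hp
    have heval : ∀ t : ℂ, eval t p = (suMatrix b b' d (a + k * d + (ν : ℂ)) t).det := by
      intro t
      have h := RingHom.map_det (evalRingHom t)
        (suMat (C b) (C b') (C d) (C (a + k * d + (ν : ℂ))) X)
      rw [RingHom.mapMatrix_apply, suMat_map] at h
      rw [hp]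
      simpa [suMatrix_eq] using h
    have hp0 : p = 0 := by
      apply Polynomial.eq_zero_of_infinite_isRoot
      apply Set.Infinite.mono _ hT
      rintro t ⟨μ, hμ, rfl⟩
      simp only [Set.mem_setOf_eq, IsRoot.def]
      rw [heval]
      exact step0 ν μ hν
    have := heval y'
    rw [hp0] at this
    simpa using this.symm
  -- Step 2: conclude for all x, y
  intro x y
  set q : Polynomial ℂ := (suMat (C b) (C b') (C d) X (C y)).det with hq
  have heval : ∀ t : ℂ, eval t q = (suMatrix b b' d t y).det := by
    intro t
    have h := RingHom.map_det (evalRingHom t) (suMat (C b) (C b') (C d) X (C y))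
    rw [RingHom.mapMatrix_apply, suMat_map] at h
    rw [hq]
    simpa [suMatrix_eq] using h
  have hS : ((fun ν : M₁ => a + k * d + (ν : ℂ)) '' {ν : M₁ | f ν ≠ 0}).Infinite := by
    apply hinf.image
    intro u _ v _ h
    exact Subtype.coe_injective (by linear_combination h)
  have hq0 : q = 0 := by
    apply Polynomial.eq_zero_of_infinite_isRoot
    apply Set.Infinite.mono _ hS
    rintro t ⟨ν, hν, rfl⟩
    simp only [Set.mem_setOf_eq, IsRoot.def]
    rw [heval]
    exact step1 ν hν y
  have := heval x
  rw [hq0] at this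
  simpa using this.symm
end

section
/- Let M = M₁ ⊕ ℤd ⊆ ℂ, and let V be a module over Vir[M] with weight decomposition V = ⊕_{μ∈M} V_{a+μ}. Suppose W₀ ⊆ ⊕_{ν∈M₁} V_{a+kd+ν} is a subspace with basis {x_ν}, satisfying L_μ x_ν = (a+kd+ν+μb)x_{μ+ν} for μ,ν ∈ M₁ and L_{μ+md} x_ν = 0 for all μ ∈ M₁ and all integers m > 0. Then the Vir[M]-submodule W generated by W₀ satisfies W_{a+kd+ν+md} = 0 for all ν ∈ M₁ and m > 0. -/
/-- The weight space `V_λ = {v | L₀ v = λ v}` of a representation `ρ` of Vir[M]. -/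
noncomputable def weightSpace {M : AddSubgroup ℂ} {V : Type} [AddCommGroup V] [Module ℂ V]
    (ρ : M → Module.End ℂ V) (lam : ℂ) : Submodule ℂ V :=
  Module.End.eigenspace (ρ 0) lam

/-- Auxiliary: repeated application of operators `ρ z` for `z` in a list, to `cAct^j (x ν)`. -/
noncomputable def vGen {M M₁ : AddSubgroup ℂ} {V : Type} [AddCommGroup V] [Module ℂ V]
    (ρ : M → Module.End ℂ V) (cAct : Module.End ℂ V) (x : M₁ → V)
    (L : List M) (ν : M₁) (j : ℕ) : V :=
  L.foldr (fun z v => ρ z v) ((cAct ^ j) (x ν))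

/-- from the proof of Lemma 3.1: Let `M = M₁ ⊕ ℤd ⊆ ℂ` and let `V` be a
Vir[M]-module with weight decomposition supported on `a + M`.  If `W₀` has a linearly
independent spanning family `{x_ν | ν ∈ M₁}` with `x_ν` of weight `a + kd + ν`,
`L_μ x_ν = (a+kd+ν+μb) x_{μ+ν}` for `μ, ν ∈ M₁`, and `L_{μ+md} x_ν = 0` for `μ ∈ M₁`,
`m > 0`, then the Vir[M]-submodule `W` generated by the `x_ν` has
`W_{a+kd+ν+md} = 0` for all `ν ∈ M₁` and `m > 0`. -/
theorem generated_submodule_weight_vanishing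
    (M M₁ : AddSubgroup ℂ) (hM₁ : M₁ ≤ M) (d : ℂ) (hdM : d ∈ M)
    (hsum : ∀ z : ℂ, z ∈ M ↔ ∃ w ∈ M₁, ∃ m : ℤ, z = w + (m : ℂ) * d)
    (huniq : ∀ w ∈ M₁, ∀ m : ℤ, w + (m : ℂ) * d = 0 → w = 0 ∧ m = 0)
    (V : Type) [AddCommGroup V] [Module ℂ V]
    (ρ : M → Module.End ℂ V) (cAct : Module.End ℂ V)
    (hrel : ∀ μ ν : M, ρ μ ∘ₗ ρ ν - ρ ν ∘ₗ ρ μ =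
      ((ν : ℂ) - (μ : ℂ)) • ρ (μ + ν) -
        ((if (μ : ℂ) = -(ν : ℂ) then ((μ : ℂ)^3 - (μ : ℂ)) / 12 else 0) • cAct))
    (hcc : ∀ μ : M, ρ μ ∘ₗ cAct = cAct ∘ₗ ρ μ)
    (a : ℂ) (k : ℤ) (b : ℂ)
    (hdecomp : (⨆ μ : M, weightSpace ρ (a + (μ : ℂ))) = ⊤)
    (x : M₁ → V) (hxli : LinearIndependent ℂ x)
    (hxwt : ∀ ν : M₁, x ν ∈ weightSpace ρ (a + (k : ℂ) * d + (ν : ℂ)))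
    (hx1 : ∀ μ ν : M₁, ρ ⟨(μ : ℂ), hM₁ μ.2⟩ (x ν) =
      (a + (k : ℂ) * d + (ν : ℂ) + (μ : ℂ) * b) • x (μ + ν))
    (hx2 : ∀ z : M, (∃ μ ∈ M₁, ∃ m : ℤ, 0 < m ∧ (z : ℂ) = μ + (m : ℂ) * d) →
      ∀ ν : M₁, ρ z (x ν) = 0)
    (W : Submodule ℂ V)
    (hW : W = sInf {U : Submodule ℂ V | (∀ ν : M₁, x ν ∈ U) ∧
      (∀ μ : M, ∀ w ∈ U, ρ μ w ∈ U) ∧ (∀ w ∈ U, cAct w ∈ U)}) :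
    ∀ (ν : M₁) (m : ℤ), 0 < m →
      W ⊓ weightSpace ρ (a + (k : ℂ) * d + (ν : ℂ) + (m : ℂ) * d) = ⊥ := by
  classical
  -- nonpositive / positive degree predicates
  set NP : M → Prop := fun z => ∃ w ∈ M₁, ∃ m : ℤ, m ≤ 0 ∧ (z : ℂ) = w + (m : ℂ) * d with hNP
  set Pos : M → Prop := fun z => ∃ w ∈ M₁, ∃ m : ℤ, 0 < m ∧ (z : ℂ) = w + (m : ℂ) * d with hPos
  have hdich : ∀ z : M, NP z ∨ Pos z := by
    intro z
    obtain ⟨w, hw, m, hm⟩ := (hsum z).mp z.2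
    rcases le_or_gt m 0 with h | h
    · exact Or.inl ⟨w, hw, m, h, hm⟩
    · exact Or.inr ⟨w, hw, m, h, hm⟩
  -- the generating set and the candidate submodule
  set G : Set V :=
    { v | ∃ L : List M, (∀ z ∈ L, NP z) ∧ ∃ ν j, v = vGen ρ cAct x L ν j } with hG
  set U : Submodule ℂ V := Submodule.span ℂ G with hUdef
  -- pointwise commutation facts
  have hccv : ∀ (z : M) (v : V), ρ z (cAct v) = cAct (ρ z v) := fun z v =>
    LinearMap.ext_iff.mp (hcc z) v
  have hpowc : ∀ (j : ℕ) (z : M) (v : V), ρ z ((cAct ^ j) v) = (cAct ^ j) (ρ z v) := by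
    intro j
    induction j with
    | zero => intro z v; simp
    | succ j ih =>
      intro z v
      rw [pow_succ', Module.End.mul_apply, Module.End.mul_apply, hccv, ih]
  -- the basic commutator relation applied to a vector
  have hrelv : ∀ (μ ν : M) (v : V), ρ μ (ρ ν v) = ρ ν (ρ μ v) +
      ((ν : ℂ) - (μ : ℂ)) • ρ (μ + ν) v -
      (if (μ : ℂ) = -(ν : ℂ) then ((μ : ℂ)^3 - (μ : ℂ)) / 12 else 0) • cAct v := by
    intro μ ν v
    have h := LinearMap.ext_iff.mp (hrel μ ν) v
    simp only [LinearMap.sub_apply, LinearMap.comp_apply, LinearMap.smul_apply] at h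
    linear_combination (norm := module) h
  -- shifting weight spaces
  have hshift : ∀ (z : M) (lam : ℂ) (v : V), v ∈ Module.End.eigenspace (ρ 0) lam →
      ρ z v ∈ Module.End.eigenspace (ρ 0) (lam + (z : ℂ)) := by
    intro z lam v hv
    rw [Module.End.mem_eigenspace_iff] at hv ⊢
    have h := hrelv 0 z v
    have hz : ((0 : M) : ℂ) = 0 := rfl
    rw [hz] at h
    have hc : (if (0 : ℂ) = -(z : ℂ) then ((0 : ℂ)^3 - (0 : ℂ)) / 12 else 0) = 0 := by
      split <;> norm_num
    rw [hc, zero_smul, sub_zero, zero_add, hv] at h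
    rw [h]
    rw [map_smul]
    module
  have hcwt : ∀ (lam : ℂ) (v : V), v ∈ Module.End.eigenspace (ρ 0) lam →
      cAct v ∈ Module.End.eigenspace (ρ 0) lam := by
    intro lam v hv
    rw [Module.End.mem_eigenspace_iff] at hv ⊢
    rw [hccv, hv, map_smul]
  -- cAct slides into vGen
  have hcslide : ∀ (L : List M) (ν : M₁) (j : ℕ),
      cAct (vGen ρ cAct x L ν j) = vGen ρ cAct x L ν (j + 1) := by
    intro L
    induction L with
    | nil =>
      intro ν j
      show cAct ((cAct ^ j) (x ν)) = (cAct ^ (j + 1)) (x ν)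
      rw [pow_succ', Module.End.mul_apply]
    | cons z L ih =>
      intro ν j
      show cAct (ρ z (vGen ρ cAct x L ν j)) = ρ z (vGen ρ cAct x L ν (j + 1))
      rw [← hccv, ih]
  -- closure of U under cAct
  have hB : ∀ v ∈ U, cAct v ∈ U := by
    intro v hv
    induction hv using Submodule.span_induction with
    | mem v hvG =>
      obtain ⟨L, hL, ν, j, rfl⟩ := hvG
      rw [hcslide]
      exact Submodule.subset_span ⟨L, hL, ν, j + 1, rfl⟩
    | zero => simp
    | add v w _ _ hv hw => rw [map_add]; exact U.add_mem hv hw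
    | smul c v _ hv => rw [map_smul]; exact U.smul_mem c hv
  -- closure of U under ρ z for NP z
  have hA : ∀ z : M, NP z → ∀ v ∈ U, ρ z v ∈ U := by
    intro z hz v hv
    induction hv using Submodule.span_induction with
    | mem v hvG =>
      obtain ⟨L, hL, ν, j, rfl⟩ := hvG
      refine Submodule.subset_span ⟨z :: L, ?_, ν, j, rfl⟩
      intro y hy
      rcases List.mem_cons.mp hy with h | h
      · exact h ▸ hz
      · exact hL y h
    | zero => simp
    | add v w _ _ hv hw => rw [map_add]; exact U.add_mem hv hw
    | smul c v _ hv => rw [map_smul]; exact U.smul_mem c hv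
  -- closure of U under ρ z for Pos z (the key induction)
  have hCgen : ∀ (L : List M), (∀ y ∈ L, NP y) → ∀ (ν : M₁) (j : ℕ) (z : M), Pos z →
      ρ z (vGen ρ cAct x L ν j) ∈ U := by
    intro L
    induction L with
    | nil =>
      intro _ ν j z hz
      show ρ z ((cAct ^ j) (x ν)) ∈ U
      rw [hpowc, hx2 z hz ν, map_zero]
      exact U.zero_mem
    | cons z₁ L ih =>
      intro hL ν j z hz
      have hL' : ∀ y ∈ L, NP y := fun y hy => hL y (List.mem_cons_of_mem _ hy)
      have hz₁ : NP z₁ := hL z₁ (List.mem_cons_self)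
      have hvU : vGen ρ cAct x L ν j ∈ U := Submodule.subset_span ⟨L, hL', ν, j, rfl⟩
      show ρ z (ρ z₁ (vGen ρ cAct x L ν j)) ∈ U
      rw [hrelv z z₁]
      refine U.sub_mem (U.add_mem ?_ ?_) ?_
      · exact hA z₁ hz₁ _ (ih hL' ν j z hz)
      · refine U.smul_mem _ ?_
        rcases hdich (z + z₁) with h | h
        · exact hA _ h _ hvU
        · exact ih hL' ν j _ h
      · exact U.smul_mem _ (hB _ hvU)
  have hC : ∀ z : M, Pos z → ∀ v ∈ U, ρ z v ∈ U := by
    intro z hz v hv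
    induction hv using Submodule.span_induction with
    | mem v hvG =>
      obtain ⟨L, hL, ν, j, rfl⟩ := hvG
      exact hCgen L hL ν j z hz
    | zero => simp
    | add v w _ _ hv hw => rw [map_add]; exact U.add_mem hv hw
    | smul c v _ hv => rw [map_smul]; exact U.smul_mem c hv
  -- W ≤ U
  have hWU : W ≤ U := by
    rw [hW]
    refine sInf_le ?_
    refine ⟨?_, ?_, hB⟩
    · intro ν
      refine Submodule.subset_span ⟨[], by simp, ν, 0, ?_⟩
      show x ν = (cAct ^ 0) (x ν)
      simp
    · intro z v hv
      rcases hdich z with h | h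
      · exact hA z h v hv
      · exact hC z h v hv
  -- weights of generators
  have hwt : ∀ (L : List M), (∀ y ∈ L, NP y) → ∀ (ν : M₁) (j : ℕ),
      ∃ w ∈ M₁, ∃ m' : ℤ, m' ≤ 0 ∧
        vGen ρ cAct x L ν j ∈
          Module.End.eigenspace (ρ 0) (a + (k : ℂ) * d + ((ν : ℂ) + w) + (m' : ℂ) * d) := by
    intro L
    induction L with
    | nil =>
      intro _ ν j
      refine ⟨0, M₁.zero_mem, 0, le_refl 0, ?_⟩
      have hx : (cAct ^ j) (x ν) ∈
          Module.End.eigenspace (ρ 0) (a + (k : ℂ) * d + (ν : ℂ)) := by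
        induction j with
        | zero => rw [pow_zero, Module.End.one_apply]; exact hxwt ν
        | succ j ihj =>
          rw [pow_succ', Module.End.mul_apply]
          exact hcwt _ _ ihj
      show (cAct ^ j) (x ν) ∈ _
      convert hx using 2
      push_cast
      ring
    | cons z L ih =>
      intro hL ν j
      have hL' : ∀ y ∈ L, NP y := fun y hy => hL y (List.mem_cons_of_mem _ hy)
      obtain ⟨w₁, hw₁, m₁, hm₁, hz⟩ := hL z (List.mem_cons_self)
      obtain ⟨w, hw, m', hm', hmem⟩ := ih hL' ν j
      refine ⟨w + w₁, M₁.add_mem hw hw₁, m' + m₁, by omega, ?_⟩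
      have := hshift z _ _ hmem
      show ρ z (vGen ρ cAct x L ν j) ∈ _
      convert this using 2
      rw [hz]
      push_cast
      ring
  -- conclusion
  intro ν m hm
  rw [eq_bot_iff]
  intro v hv
  obtain ⟨hvW, hvwt⟩ := Submodule.mem_inf.mp hv
  have hvU : v ∈ U := hWU hvW
  set lam₀ : ℂ := a + (k : ℂ) * d + (ν : ℂ) + (m : ℂ) * d with hlam₀
  -- U is contained in the sup of eigenspaces with eigenvalue ≠ lam₀
  have hUle : U ≤ ⨆ (μ : ℂ) (_ : μ ≠ lam₀), Module.End.eigenspace (ρ 0) μ := by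
    rw [hUdef, Submodule.span_le]
    rintro v ⟨L, hL, ν', j, rfl⟩
    obtain ⟨w, hw, m', hm', hmem⟩ := hwt L hL ν' j
    have hne : a + (k : ℂ) * d + ((ν' : ℂ) + w) + (m' : ℂ) * d ≠ lam₀ := by
      intro h
      rw [hlam₀] at h
      have key : ((ν : ℂ) - ((ν' : ℂ) + w)) + ((m - m' : ℤ) : ℂ) * d = 0 := by
        push_cast
        linear_combination -h
      obtain ⟨-, h2⟩ := huniq _ (M₁.sub_mem ν.2 (M₁.add_mem ν'.2 hw)) (m - m') key
      omega
    exact Submodule.mem_iSup_of_mem _ (Submodule.mem_iSup_of_mem hne hmem)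
  have hdisj : Disjoint (Module.End.eigenspace (ρ 0) lam₀)
      (⨆ (μ : ℂ) (_ : μ ≠ lam₀), Module.End.eigenspace (ρ 0) μ) :=
    (Module.End.eigenspaces_iSupIndep (ρ 0)) lam₀
  have : v ∈ (⊥ : Submodule ℂ V) := by
    have h1 : v ∈ Module.End.eigenspace (ρ 0) lam₀ := hvwt
    have h2 : v ∈ ⨆ (μ : ℂ) (_ : μ ≠ lam₀), Module.End.eigenspace (ρ 0) μ := hUle hvU
    exact hdisj.le_bot ⟨h1, h2⟩
  exact this
end
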